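/- There exist a finite topological space B, sheaves of types F and G on B, and a point b ∈ B such that Supp F = Supp G (so that interior(Supp G ∪ (B ∖ Supp F)) = B), yet no open neighborhood U of b admits a presheaf morphism F|_U → G|_U; hence Supp Hom(F,G) ≠ B, and the inclusion Supp Hom(F,G) ⊆ interior(Supp G ∪ (B ∖ Supp F)) can be strict. -/

import Mathlib

open TopologicalSpace

/-- A presheaf of types on a topological space `B`. -/
structure Psh (B : Type) [TopologicalSpace B] where
  obj : Opens B → Type
  res : ∀ {U V : Opens B}, V ≤ U → obj U → obj V
  res_id : ∀ (U : Opens B) (x : obj U), res le_rfl x = x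
  res_comp : ∀ {U V W : Opens B} (hWV : W ≤ V) (hVU : V ≤ U) (x : obj U),
    res hWV (res hVU x) = res (hWV.trans hVU) x

namespace Psh

variable {B : Type} [TopologicalSpace B]

/-- The sheaf conditions: separation and gluing for arbitrary open covers. -/
def IsSheaf (F : Psh B) : Prop :=
  ∀ {ι : Type} (U : Opens B) (V : ι → Opens B) (hV : ∀ i, V i ≤ U),
    (∀ x ∈ U, ∃ i, x ∈ V i) →
    (∀ s t : F.obj U, (∀ i, F.res (hV i) s = F.res (hV i) t) → s = t) ∧
    ∀ sf : ∀ i, F.obj (V i),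
      (∀ i j, F.res (inf_le_left : V i ⊓ V j ≤ V i) (sf i)
            = F.res (inf_le_right : V i ⊓ V j ≤ V j) (sf j)) →
      ∃ s : F.obj U, ∀ i, F.res (hV i) s = sf i

/-- The support of a presheaf: the union of all open sets with nonempty sections. -/
def supp (F : Psh B) : Set B := {b | ∃ U : Opens B, b ∈ U ∧ Nonempty (F.obj U)}

/-- The germ relation at a point. -/
def stalkRel (F : Psh B) (b : B) :
    (Σ U : {U : Opens B // b ∈ U}, F.obj U.1) →
      (Σ U : {U : Opens B // b ∈ U}, F.obj U.1) → Prop :=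
  fun x y => ∃ (W : Opens B) (_ : b ∈ W) (h1 : W ≤ x.1.1) (h2 : W ≤ y.1.1),
    F.res h1 x.2 = F.res h2 y.2

/-- The stalk of a presheaf at a point: the set of germs, i.e. the colimit of
sections over open neighborhoods of the point. -/
def stalk (F : Psh B) (b : B) : Type := Quot (F.stalkRel b)

/-- The germ of a section at a point. -/
def germ (F : Psh B) {b : B} {U : Opens B} (hb : b ∈ U) (s : F.obj U) : F.stalk b :=
  Quot.mk _ ⟨⟨U, hb⟩, s⟩

/-- A morphism of presheaves `F|_U → G|_U` (restricted to opens contained in `U`). -/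
structure Hom (F G : Psh B) (U : Opens B) where
  app : ∀ (V : Opens B), V ≤ U → F.obj V → G.obj V
  natural : ∀ {V W : Opens B} (hVU : V ≤ U) (hWV : W ≤ V) (s : F.obj V),
    G.res hWV (app V hVU s) = app W (hWV.trans hVU) (F.res hWV s)

/-- The Hom-presheaf `U ↦ {presheaf morphisms F|_U → G|_U}`. -/
def homPsh (F G : Psh B) : Psh B where
  obj U := Hom F G U
  res {U V} h φ :=
    { app := fun W hW => φ.app W (hW.trans h)
      natural := fun hVU hWV s => φ.natural _ hWV s }
  res_id := fun U φ => rfl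
  res_comp := fun _ _ _ => rfl

/-- Objectwise binary product of presheaves. -/
def prodObj (F G : Psh B) : Psh B where
  obj U := F.obj U × G.obj U
  res h x := (F.res h x.1, G.res h x.2)
  res_id U x := by (try dsimp only); rw [F.res_id, G.res_id]
  res_comp h1 h2 x := by dsimp only; rw [F.res_comp, G.res_comp]

/-- Objectwise binary coproduct of presheaves. -/
def sumObj (F G : Psh B) : Psh B where
  obj U := F.obj U ⊕ G.obj U
  res h x := x.elim (fun a => Sum.inl (F.res h a)) (fun c => Sum.inr (G.res h c))
  res_id U x := by
    cases x with
    | inl a => simp only [Sum.elim_inl]; rw [F.res_id]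
    | inr c => simp only [Sum.elim_inr]; rw [G.res_id]
  res_comp h1 h2 x := by
    cases x with
    | inl a => simp only [Sum.elim_inl]; rw [F.res_comp]
    | inr c => simp only [Sum.elim_inr]; rw [G.res_comp]

/-- Objectwise product of a family of presheaves. -/
def piObj {ι : Type} (F : ι → Psh B) : Psh B where
  obj U := ∀ i, (F i).obj U
  res h x i := (F i).res h (x i)
  res_id U x := by funext i; exact (F i).res_id U (x i)
  res_comp h1 h2 x := by funext i; exact (F i).res_comp h1 h2 (x i)

/-- Objectwise coproduct (disjoint union) of a family of presheaves. -/
def sigmaObj {ι : Type} (F : ι → Psh B) : Psh B where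
  obj U := Σ i, (F i).obj U
  res h x := ⟨x.1, (F x.1).res h x.2⟩
  res_id U x := by
    rcases x with ⟨i, s⟩
    exact congrArg (Sigma.mk i) ((F i).res_id U s)
  res_comp h1 h2 x := by
    rcases x with ⟨i, s⟩
    exact congrArg (Sigma.mk i) ((F i).res_comp h1 h2 s)

/-- The characteristic presheaf of an open set: a one-element type on opens
contained in `W`, the empty type elsewhere. -/
def char (W : Opens B) : Psh B where
  obj U := PLift (U ≤ W)
  res h x := ⟨h.trans x.down⟩
  res_id U x := rfl
  res_comp _ _ _ := rfl

/-- An isomorphism of presheaves. -/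
structure Iso (F G : Psh B) where
  hom : ∀ U, F.obj U ≃ G.obj U
  natural : ∀ {U V : Opens B} (h : V ≤ U) (s : F.obj U),
    G.res h (hom U s) = hom V (F.res h s)

end Psh

/-!
Take the diamond `bot < left, right < top` with its Alexandrov topology, `F` the one-point
sheaf on the open set `{top, left, right}`, and `G` the sheaf of continuous `Bool`-valued
functions that are `false` at `left` and `true` at `right`. Both have support
`{top, left, right}`. Every neighbourhood of `bot` is the whole space, and a morphism `F → G`
on it would send the sections of `F` over `{top, left}` and `{top, right}`, which agree at
`top`, to sections of `G` agreeing at `top`; but continuity forces their values at `top` to be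
those at `left` and `right`, namely `false` and `true`.
-/

namespace Psh

variable {B : Type} [TopologicalSpace B]

theorem notMem_supp_iff {F : Psh B} {b : B} :
    b ∉ F.supp ↔ ∀ U : Opens B, b ∈ U → IsEmpty (F.obj U) := by
  simp [supp, not_nonempty_iff]

theorem supp_char (W : Opens B) : (char W).supp = W := by
  ext x
  constructor
  · rintro ⟨U, hxU, ⟨s⟩⟩
    exact s.down hxU
  · exact fun hx => ⟨W, hx, ⟨⟨le_rfl⟩⟩⟩

theorem char_isSheaf (W : Opens B) : (char W).IsSheaf := by
  intro ι U V _ hcov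
  refine ⟨fun s t _ => by cases s; cases t; rfl, fun sf _ => ⟨⟨fun x hx => ?_⟩, fun _ => rfl⟩⟩
  obtain ⟨i, hi⟩ := hcov x hx
  exact (sf i).down hi

theorem Hom.isEmpty_of_compatible {F G : Psh B} {U V₁ V₂ : Opens B} (h₁ : V₁ ≤ U) (h₂ : V₂ ≤ U)
    (s₁ : F.obj V₁) (s₂ : F.obj V₂)
    (hs : F.res (inf_le_left : V₁ ⊓ V₂ ≤ V₁) s₁ = F.res inf_le_right s₂)
    (hG : ∀ g₁ g₂, G.res (inf_le_left : V₁ ⊓ V₂ ≤ V₁) g₁ ≠ G.res inf_le_right g₂) :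
    IsEmpty (Hom F G U) :=
  ⟨fun φ => hG (φ.app V₁ h₁ s₁) (φ.app V₂ h₂ s₂) (by rw [φ.natural, φ.natural, hs])⟩

abbrev continuousFun (X : Type) [TopologicalSpace X] (P : B → X → Prop) : Psh B where
  obj U := {f : U → X // Continuous f ∧ ∀ x : U, P x (f x)}
  res h f :=
    ⟨f.1 ∘ Set.inclusion h, f.2.1.comp (continuous_inclusion h), fun x => f.2.2 (Set.inclusion h x)⟩
  res_id _ _ := rfl
  res_comp _ _ _ := rfl

theorem continuousFun_isSheaf (X : Type) [TopologicalSpace X] (P : B → X → Prop) :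
    (continuousFun X P).IsSheaf := by
  intro ι U V hV hcov
  refine ⟨fun s t hst => Subtype.ext (funext fun x => ?_), fun sf hsf => ?_⟩
  · obtain ⟨i, hi⟩ := hcov x x.2
    exact congrFun (congrArg Subtype.val (hst i)) ⟨x, hi⟩
  choose idx hidx using hcov
  have agree : ∀ i j (x : B) (hi : x ∈ V i) (hj : x ∈ V j), (sf i).1 ⟨x, hi⟩ = (sf j).1 ⟨x, hj⟩ :=
    fun i j x hi hj => congrFun (congrArg Subtype.val (hsf i j)) (⟨x, hi, hj⟩ : ↥(V i ⊓ V j))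
  let f : U → X := fun x => (sf (idx x x.2)).1 ⟨x, hidx x x.2⟩
  have hf : ∀ i, f ∘ Set.inclusion (hV i) = (sf i).1 :=
    fun i => funext fun x => agree _ _ _ _ x.2
  -- continuity is local: on the open piece `V i` of `U`, `f` is the continuous `sf i`
  have hcont : Continuous f := by
    refine continuous_iff_continuousAt.mpr fun x => ?_
    let i := idx x x.2
    have hemb : Topology.IsOpenEmbedding (Set.inclusion (hV i)) :=
      .inclusion _ ((V i).isOpen.preimage continuous_subtype_val)
    have hcont_i : Continuous (f ∘ Set.inclusion (hV i)) := (hf i).symm ▸ (sf i).2.1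
    exact hemb.continuousAt_iff.mp (hcont_i.continuousAt (x := ⟨x, hidx x x.2⟩))
  exact ⟨⟨f, hcont, fun x => (sf (idx x x.2)).2.2 ⟨x, hidx x x.2⟩⟩, fun i => Subtype.ext (hf i)⟩

theorem continuousFun_apply_eq_of_specializes {X : Type} [TopologicalSpace X] [T1Space X]
    {P : B → X → Prop} {U : Opens B} (s : (continuousFun X P).obj U) {x y : B} (hxy : x ⤳ y)
    (hx : x ∈ U) (hy : y ∈ U) : s.1 ⟨x, hx⟩ = s.1 ⟨y, hy⟩ :=
  (((subtype_specializes_iff ⟨x, hx⟩ ⟨y, hy⟩).mpr hxy).map s.2.1).eq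

end Psh

inductive Diamond : Type
  | top | left | right | bot
deriving DecidableEq

namespace Diamond

instance : Fintype Diamond :=
  ⟨{top, left, right, bot}, fun x => by cases x <;> decide⟩

/-- The Alexandrov topology of the order `bot < left, right < top`: the open sets are the
upper sets. -/
instance : TopologicalSpace Diamond where
  IsOpen U := (left ∈ U → top ∈ U) ∧ (right ∈ U → top ∈ U) ∧ (bot ∈ U → ∀ x, x ∈ U)
  isOpen_univ := ⟨fun _ => trivial, fun _ => trivial, fun _ _ => trivial⟩
  isOpen_inter _ _ hU hV :=
    ⟨fun h => ⟨hU.1 h.1, hV.1 h.2⟩, fun h => ⟨hU.2.1 h.1, hV.2.1 h.2⟩,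
      fun h x => ⟨hU.2.2 h.1 x, hV.2.2 h.2 x⟩⟩
  isOpen_sUnion _ hS :=
    ⟨fun ⟨s, hs, h⟩ => ⟨s, hs, (hS s hs).1 h⟩, fun ⟨s, hs, h⟩ => ⟨s, hs, (hS s hs).2.1 h⟩,
      fun ⟨s, hs, h⟩ x => ⟨s, hs, (hS s hs).2.2 h x⟩⟩

theorem top_specializes_left : top ⤳ left :=
  specializes_iff_forall_open.mpr fun _ hU h => hU.1 h

theorem top_specializes_right : top ⤳ right :=
  specializes_iff_forall_open.mpr fun _ hU h => hU.2.1 h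

theorem specializes_bot (x : Diamond) : x ⤳ bot :=
  specializes_iff_forall_open.mpr fun _ hU h => hU.2.2 h x

theorem mem_of_bot_mem {U : Opens Diamond} (hU : bot ∈ U) (x : Diamond) : x ∈ U :=
  U.isOpen.2.2 hU x

def opensLeft : Opens Diamond := ⟨{top, left}, by refine ⟨?_, ?_, ?_⟩ <;> simp⟩

def opensRight : Opens Diamond := ⟨{top, right}, by refine ⟨?_, ?_, ?_⟩ <;> simp⟩

@[simp] theorem mem_opensLeft {x : Diamond} : x ∈ opensLeft ↔ x = top ∨ x = left := Iff.rfl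

@[simp] theorem mem_opensRight {x : Diamond} : x ∈ opensRight ↔ x = top ∨ x = right := Iff.rfl

abbrev F : Psh Diamond := Psh.char (opensLeft ⊔ opensRight)

abbrev G : Psh Diamond :=
  Psh.continuousFun Bool fun x v => (x = left → v = false) ∧ (x = right → v = true)

theorem G_obj_isEmpty {U : Opens Diamond} (hU : bot ∈ U) : IsEmpty (G.obj U) := by
  refine ⟨fun s => ?_⟩
  have hall := mem_of_bot_mem hU
  have hl := Psh.continuousFun_apply_eq_of_specializes s (specializes_bot left) (hall _) hU
  have hr := Psh.continuousFun_apply_eq_of_specializes s (specializes_bot right) (hall _) hU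
  rw [(s.2.2 ⟨left, hall _⟩).1 rfl, (s.2.2 ⟨right, hall _⟩).2 rfl] at *
  exact Bool.false_ne_true (hl.trans hr.symm)

theorem supp_G : G.supp = ↑(opensLeft ⊔ opensRight) := by
  ext x
  constructor
  · rintro ⟨U, hxU, ⟨s⟩⟩
    cases x
    case bot => exact ((G_obj_isEmpty hxU).false s).elim
    all_goals simp
  · rintro (hx | hx)
    · exact ⟨opensLeft, hx, ⟨⟨fun _ => false, continuous_const, by simp⟩⟩⟩
    · exact ⟨opensRight, hx, ⟨⟨fun _ => true, continuous_const, by simp⟩⟩⟩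

theorem hom_isEmpty (U : Opens Diamond) (hU : bot ∈ U) : IsEmpty (Psh.Hom F G U) := by
  have hall := mem_of_bot_mem hU
  refine Psh.Hom.isEmpty_of_compatible (V₁ := opensLeft) (V₂ := opensRight)
    (fun x _ => hall x) (fun x _ => hall x) ⟨le_sup_left⟩ ⟨le_sup_right⟩ rfl fun g₁ g₂ h => ?_
  have htop : top ∈ opensLeft ⊓ opensRight := by simp
  have h₁ : g₁.1 ⟨top, htop.1⟩ = false := by
    rw [Psh.continuousFun_apply_eq_of_specializes g₁ top_specializes_left htop.1 (by simp)]
    exact (g₁.2.2 ⟨left, by simp⟩).1 rfl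
  have h₂ : g₂.1 ⟨top, htop.2⟩ = true := by
    rw [Psh.continuousFun_apply_eq_of_specializes g₂ top_specializes_right htop.2 (by simp)]
    exact (g₂.2.2 ⟨right, by simp⟩).2 rfl
  have := congrFun (congrArg Subtype.val h) ⟨top, htop⟩
  exact Bool.false_ne_true (h₁.symm.trans (this.trans h₂))

end Diamond

/-- There are a finite space `B`, sheaves `F`, `G` on `B` with `Supp F = Supp G`
(so `interior (Supp G ∪ (B ∖ Supp F)) = B`), and a point `b` such that no
neighborhood of `b` admits a presheaf morphism `F|_U → G|_U`; hence the inclusion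
`Supp Hom(F,G) ⊆ interior (Supp G ∪ (B ∖ Supp F))` can be strict. -/
theorem stmt_15 :
    ∃ (B : Type) (_ : TopologicalSpace B) (_ : Finite B) (F G : Psh B) (b : B),
      F.IsSheaf ∧ G.IsSheaf ∧ F.supp = G.supp ∧
      (∀ U : Opens B, b ∈ U → IsEmpty (Psh.Hom F G U)) ∧
      interior (G.supp ∪ F.suppᶜ) = Set.univ ∧
      (Psh.homPsh F G).supp ≠ interior (G.supp ∪ F.suppᶜ) := by
  have hsupp : Diamond.F.supp = Diamond.G.supp := by rw [Psh.supp_char, Diamond.supp_G]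
  have hint : interior (Diamond.G.supp ∪ Diamond.F.suppᶜ) = Set.univ := by
    rw [← hsupp, Set.union_compl_self, interior_univ]
  refine ⟨Diamond, inferInstance, inferInstance, Diamond.F, Diamond.G, .bot,
    Psh.char_isSheaf _, Psh.continuousFun_isSheaf _ _, hsupp, Diamond.hom_isEmpty, hint, ?_⟩
  rw [hint]
  exact Set.ne_univ_iff_exists_notMem _ |>.mpr ⟨.bot, Psh.notMem_supp_iff.mpr Diamond.hom_isEmpty⟩
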